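/- With the notation of the previous statement, writing $R(t) = v(t) - v_0(t)$ and $r(t) = \dot c c^{-1} - \dot c_0 c_0^{-1}$ with $\|r(t)\|_{c_0} < \varepsilon$ and $\|v_0(t)\|_{c_0} = 1$, one has the differential inequality $\frac{d}{dt}\| R(t) \|^2_{c_0} \le 2\varepsilon ( \| R(t) \|^2_{c_0} + \| R(t) \|_{c_0} )$. -/

import Mathlib

/-!
Write `h = c₀ t = g²` with `g` Hermitian. Conjugation by `g` turns `‖·‖_h` into `1/√2` times the
Frobenius norm, so the `h`-pairing satisfies Cauchy–Schwarz, and the 2×2 Böttcher–Wenzel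
inequality `‖[X, Y]‖_F ≤ √2 ‖X‖_F ‖Y‖_F` becomes `‖[X, Y]‖_h ≤ 2 ‖X‖_h ‖Y‖_h`.
Differentiating, `d/dt ‖R‖²_h = ⟨2Ṙ - [ḣ h⁻¹, R], R⟩_h`, and the two parallel transport
equations turn `2Ṙ - [ċ₀ c₀⁻¹, R]` into `[r, R + v₀]`. The two estimates then bound the
derivative by `2 ‖r‖ (‖R‖² + ‖v₀‖ ‖R‖)`.
-/

open Matrix
open scoped ComplexOrder

attribute [local instance] Matrix.frobeniusNormedAddCommGroup Matrix.frobeniusNormedRing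
  Matrix.frobeniusNormedSpace

/-- Membership in the matrix model `𝒟` of hyperbolic 3-space. -/
def memD (h : Matrix (Fin 2) (Fin 2) ℂ) : Prop :=
  h.IsHermitian ∧ h.det = 1 ∧ h.PosDef

/-- The squared norm `‖M‖_h² = ½ tr (M h Mᴴ h⁻¹)`. -/
noncomputable def hNormSq (h M : Matrix (Fin 2) (Fin 2) ℂ) : ℝ :=
  ((2 : ℂ)⁻¹ * (M * h * Mᴴ * h⁻¹).trace).re

/-- The norm `‖M‖_h`. -/
noncomputable def hNorm (h M : Matrix (Fin 2) (Fin 2) ℂ) : ℝ :=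
  Real.sqrt (hNormSq h M)

attribute [local instance] Matrix.frobeniusNormedAlgebra

namespace Matrix

section Frobenius

variable {𝕜 : Type*} [RCLike 𝕜] {m n : Type*} [Fintype m] [Fintype n]

theorem trace_mul_conjTranspose_eq_inner (X Y : Matrix m n 𝕜) :
    (X * Yᴴ).trace =
      inner 𝕜 (WithLp.toLp 2 fun i => WithLp.toLp 2 (Y i))
        (WithLp.toLp 2 fun i => WithLp.toLp 2 (X i)) := by
  simp [PiLp.inner_apply, Matrix.trace, Matrix.mul_apply]

theorem re_trace_mul_conjTranspose_le (X Y : Matrix m n 𝕜) :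
    RCLike.re (X * Yᴴ).trace ≤ ‖X‖ * ‖Y‖ := by
  rw [trace_mul_conjTranspose_eq_inner, mul_comm]
  exact re_inner_le_norm _ _

theorem re_trace_mul_conjTranspose_self (X : Matrix m n 𝕜) :
    RCLike.re (X * Xᴴ).trace = ‖X‖ ^ 2 := by
  rw [trace_mul_conjTranspose_eq_inner]
  exact inner_self_eq_norm_sq _

end Frobenius

open Complex in
theorem frobenius_norm_sq_fin_two (A : Matrix (Fin 2) (Fin 2) ℂ) :
    ‖A‖ ^ 2 = normSq (A 0 0) + normSq (A 0 1) + normSq (A 1 0) + normSq (A 1 1) := by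
  rw [← re_trace_mul_conjTranspose_self]
  simp only [trace_fin_two, mul_apply, Fin.sum_univ_two, conjTranspose_apply, RCLike.star_def,
    mul_conj, RCLike.re_to_complex, add_re, ofReal_re]
  ring

open Complex ComplexConjugate in
theorem frobenius_norm_lie_sq_le_fin_two (A B : Matrix (Fin 2) (Fin 2) ℂ) :
    ‖⁅A, B⁆‖ ^ 2 ≤ 2 * ‖A‖ ^ 2 * ‖B‖ ^ 2 := by
  obtain ⟨a, b, c, d, rfl⟩ : ∃ a b c d, A = !![a, b; c, d] := ⟨_, _, _, _, eta_fin_two A⟩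
  obtain ⟨e, f, g, k, rfl⟩ : ∃ e f g k, B = !![e, f; g, k] := ⟨_, _, _, _, eta_fin_two B⟩
  simp only [frobenius_norm_sq_fin_two, Ring.lie_def, sub_apply, mul_apply, Fin.sum_univ_two,
    of_apply, cons_val', cons_val_zero, cons_val_one, empty_val', cons_val_fin_one]
  set C := normSq (a * e + b * g - (e * a + f * c)) + normSq (a * f + b * k - (e * b + f * d)) +
    normSq (c * e + d * g - (g * a + k * c)) + normSq (c * f + d * k - (g * b + k * d))
  set P := normSq (a - d) + 2 * normSq b + 2 * normSq c
  set Q := normSq (e - k) + 2 * normSq f + 2 * normSq g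
  -- `P / 4` and `Q / 4` are the squared norms of the traceless parts `A₀`, `B₀`, and this is
  -- `‖[A, B]‖² + 2 |⟪A₀, B₀⟫|² = 2 ‖A₀‖² ‖B₀‖²`.
  have key : 4 * C + 2 * normSq ((a - d) * conj (e - k) + 2 * b * conj f + 2 * c * conj g)
      = 2 * P * Q := by
    simp only [C, P, Q, normSq_apply, mul_re, mul_im, sub_re, sub_im, add_re, add_im, conj_re,
      conj_im, re_ofNat, im_ofNat]
    ring
  have hA : 2 * (normSq a + normSq b + normSq c + normSq d) = P + normSq (a + d) := by
    simp only [P, normSq_apply, sub_re, sub_im, add_re, add_im]; ring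
  have hB : 2 * (normSq e + normSq f + normSq g + normSq k) = Q + normSq (e + k) := by
    simp only [Q, normSq_apply, sub_re, sub_im, add_re, add_im]; ring
  have hP : 0 ≤ P := by linarith [normSq_nonneg (a - d), normSq_nonneg b, normSq_nonneg c]
  have hQ : 0 ≤ Q := by linarith [normSq_nonneg (e - k), normSq_nonneg f, normSq_nonneg g]
  calc C ≤ P * Q / 2 := by
        linarith [normSq_nonneg ((a - d) * conj (e - k) + 2 * b * conj f + 2 * c * conj g)]
    _ ≤ (P + normSq (a + d)) * (Q + normSq (e + k)) / 2 := by
      gcongr <;> linarith [normSq_nonneg (a + d), normSq_nonneg (e + k)]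
    _ = _ := by rw [← hA, ← hB]; ring

theorem PosSemidef.exists_hermitian_sqrt {𝕜 n : Type*} [RCLike 𝕜] [Fintype n] [DecidableEq n]
    {h : Matrix n n 𝕜} (hh : h.PosSemidef) : ∃ g : Matrix n n 𝕜, g.IsHermitian ∧ g * g = h := by
  open scoped MatrixOrder in
  exact ⟨CFC.sqrt h, (CFC.sqrt_nonneg h).posSemidef.1, CFC.sqrt_mul_sqrt_self h hh.nonneg⟩

end Matrix

noncomputable def hInner (h X Y : Matrix (Fin 2) (Fin 2) ℂ) : ℝ :=
  ((2 : ℂ)⁻¹ * (X * h * Yᴴ * h⁻¹).trace).re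

section hInner

variable {h g : Matrix (Fin 2) (Fin 2) ℂ}

theorem hInner_self (h X : Matrix (Fin 2) (Fin 2) ℂ) : hInner h X X = hNormSq h X := rfl

theorem hInner_add_left (h X X' Y : Matrix (Fin 2) (Fin 2) ℂ) :
    hInner h (X + X') Y = hInner h X Y + hInner h X' Y := by
  simp only [hInner, add_mul, trace_add, mul_add, Complex.add_re]

theorem hInner_comm (hh : h.IsHermitian) (X Y : Matrix (Fin 2) (Fin 2) ℂ) :
    hInner h X Y = hInner h Y X := by
  have hconj : (Y * h * Xᴴ * h⁻¹).trace = star (X * h * Yᴴ * h⁻¹).trace := by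
    rw [← trace_conjTranspose]
    simp only [conjTranspose_mul, conjTranspose_conjTranspose, conjTranspose_nonsing_inv, hh.eq,
      ← mul_assoc]
    rw [trace_mul_comm]
    simp only [← mul_assoc]
  rw [hInner, hInner, hconj, inv_mul_eq_div, inv_mul_eq_div, Complex.div_ofNat_re,
    Complex.div_ofNat_re, Complex.star_def, Complex.conj_re]

theorem hInner_eq_re_trace_conj (hg : g.IsHermitian) (hgh : g * g = h)
    (X Y : Matrix (Fin 2) (Fin 2) ℂ) :
    hInner h X Y = RCLike.re ((g⁻¹ * X * g) * (g⁻¹ * Y * g)ᴴ).trace / 2 := by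
  have hYg : (g⁻¹ * Y * g)ᴴ = g * (Yᴴ * g⁻¹) := by
    rw [conjTranspose_mul, conjTranspose_mul, conjTranspose_nonsing_inv, hg.eq]
  rw [hInner, hYg, ← hgh, Matrix.mul_inv_rev, inv_mul_eq_div, Complex.div_ofNat_re,
    RCLike.re_to_complex]
  simp only [mul_assoc]
  rw [trace_mul_comm g⁻¹]
  simp only [mul_assoc]

theorem hNormSq_eq_norm_sq (hg : g.IsHermitian) (hgh : g * g = h)
    (X : Matrix (Fin 2) (Fin 2) ℂ) : hNormSq h X = ‖g⁻¹ * X * g‖ ^ 2 / 2 := by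
  rw [← hInner_self, hInner_eq_re_trace_conj hg hgh, re_trace_mul_conjTranspose_self]

theorem hNorm_eq_norm_div_sqrt_two (hg : g.IsHermitian) (hgh : g * g = h)
    (X : Matrix (Fin 2) (Fin 2) ℂ) : hNorm h X = ‖g⁻¹ * X * g‖ / √2 := by
  rw [hNorm, hNormSq_eq_norm_sq hg hgh, Real.sqrt_div' _ zero_le_two, Real.sqrt_sq (norm_nonneg _)]

theorem hNorm_nonneg (h X : Matrix (Fin 2) (Fin 2) ℂ) : 0 ≤ hNorm h X := Real.sqrt_nonneg _

theorem hNorm_sq (hh : h.PosSemidef) (X : Matrix (Fin 2) (Fin 2) ℂ) :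
    hNorm h X ^ 2 = hNormSq h X := by
  obtain ⟨g, hg, hgh⟩ := hh.exists_hermitian_sqrt
  rw [hNorm, Real.sq_sqrt (hNormSq_eq_norm_sq hg hgh X ▸ by positivity)]

theorem hInner_le_hNorm_mul_hNorm (hh : h.PosSemidef) (X Y : Matrix (Fin 2) (Fin 2) ℂ) :
    hInner h X Y ≤ hNorm h X * hNorm h Y := by
  obtain ⟨g, hg, hgh⟩ := hh.exists_hermitian_sqrt
  rw [hInner_eq_re_trace_conj hg hgh, hNorm_eq_norm_div_sqrt_two hg hgh,
    hNorm_eq_norm_div_sqrt_two hg hgh, div_mul_div_comm, Real.mul_self_sqrt zero_le_two]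
  gcongr
  exact re_trace_mul_conjTranspose_le _ _

theorem hNorm_lie_le (hh : h.PosDef) (X Y : Matrix (Fin 2) (Fin 2) ℂ) :
    hNorm h ⁅X, Y⁆ ≤ 2 * hNorm h X * hNorm h Y := by
  obtain ⟨g, hg, hgh⟩ := hh.posSemidef.exists_hermitian_sqrt
  have hgu : IsUnit g.det := isUnit_of_mul_isUnit_left <| by
    rw [← det_mul, hgh, ← isUnit_iff_isUnit_det]; exact hh.isUnit
  have hconj : g⁻¹ * ⁅X, Y⁆ * g = ⁅g⁻¹ * X * g, g⁻¹ * Y * g⁆ := by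
    simp only [Ring.lie_def, mul_sub, sub_mul, mul_assoc, mul_nonsing_inv_cancel_left _ _ hgu]
  refine le_of_pow_le_pow_left₀ two_ne_zero
    (mul_nonneg (mul_nonneg zero_le_two (hNorm_nonneg _ _)) (hNorm_nonneg _ _)) ?_
  rw [mul_pow, mul_pow]
  simp only [hNorm_sq hh.posSemidef, hNormSq_eq_norm_sq hg hgh, hconj]
  linarith [frobenius_norm_lie_sq_le_fin_two (g⁻¹ * X * g) (g⁻¹ * Y * g)]

theorem hInner_lie_add_le (hh : h.PosDef) (r R W : Matrix (Fin 2) (Fin 2) ℂ) :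
    hInner h ⁅r, R + W⁆ R ≤ 2 * hNorm h r * (hNormSq h R + hNorm h W * hNorm h R) := by
  have hR := hNorm_nonneg h R
  have hsplit : ⁅r, R + W⁆ = ⁅r, R⁆ + ⁅r, W⁆ := by
    simp only [Ring.lie_def, mul_add, add_mul]; abel
  rw [hsplit, hInner_add_left, ← hNorm_sq hh.posSemidef]
  calc hInner h ⁅r, R⁆ R + hInner h ⁅r, W⁆ R
      ≤ 2 * hNorm h r * hNorm h R * hNorm h R + 2 * hNorm h r * hNorm h W * hNorm h R := by
        gcongr
        · exact (hInner_le_hNorm_mul_hNorm hh.posSemidef _ _).trans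
            (mul_le_mul_of_nonneg_right (hNorm_lie_le hh r R) hR)
        · exact (hInner_le_hNorm_mul_hNorm hh.posSemidef _ _).trans
            (mul_le_mul_of_nonneg_right (hNorm_lie_le hh r W) hR)
    _ = 2 * hNorm h r * (hNorm h R ^ 2 + hNorm h W * hNorm h R) := by ring

end hInner

section Calculus

variable {𝕜 n : Type*} [RCLike 𝕜] [Fintype n] {f : ℝ → Matrix n n 𝕜} {f' : Matrix n n 𝕜} {t : ℝ}

theorem HasDerivAt.nonsing_inv [DecidableEq n] (hf : HasDerivAt f f' t) (hu : IsUnit (f t)) :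
    HasDerivAt (fun s => (f s)⁻¹) (-((f t)⁻¹ * f' * (f t)⁻¹)) t := by
  obtain ⟨u, hu⟩ := hu
  have hinv : (f t)⁻¹ = ↑u⁻¹ := by rw [← hu, nonsing_inv_eq_ringInverse, Ring.inverse_unit]
  have := (hu ▸ hasFDerivAt_ringInverse (𝕜 := ℝ) u).comp_hasDerivAt t hf
  simp only [hinv, nonsing_inv_eq_ringInverse]
  exact this

theorem HasDerivAt.matrix_trace (hf : HasDerivAt f f' t) :
    HasDerivAt (fun s => (f s).trace) f'.trace t :=
  (LinearMap.toContinuousLinearMap (traceLinearMap n ℝ 𝕜)).hasFDerivAt.comp_hasDerivAt t hf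

end Calculus

theorem hasDerivAt_hNormSq {h R : ℝ → Matrix (Fin 2) (Fin 2) ℂ} {h' R' : Matrix (Fin 2) (Fin 2) ℂ}
    {t : ℝ} (hh : HasDerivAt h h' t) (hR : HasDerivAt R R' t) (hherm : (h t).IsHermitian)
    (hu : IsUnit (h t)) :
    HasDerivAt (fun s => hNormSq (h s) (R s))
      (hInner (h t) ((2 : ℕ) • R' - ⁅h' * (h t)⁻¹, R t⁆) (R t)) t := by
  set H := h t
  set k := H⁻¹
  set S := R t
  have hD : HasDerivAt (fun s => hNormSq (h s) (R s))
      (((2 : ℂ)⁻¹ * (((R' * H + S * h') * Sᴴ + S * H * R'ᴴ) * k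
        + S * H * Sᴴ * -(k * h' * k)).trace).re) t :=
    Complex.reCLM.hasFDerivAt.comp_hasDerivAt t
      ((((hR.mul hh).mul hR.star).mul (hh.nonsing_inv hu)).matrix_trace.const_mul (2 : ℂ)⁻¹)
  refine hD.congr_deriv ?_
  -- The `R'`- and `R'ᴴ`-terms have the same real part, and the `h'`-terms differ from the
  -- commutator term by `h' k M - M h' k`, which is traceless.
  have hkH : k * H = 1 := nonsing_inv_mul _ ((isUnit_iff_isUnit_det H).1 hu)
  have hE : ((2 : ℕ) • R' - ⁅h' * k, S⁆) * H * Sᴴ * k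
      = 2 • (R' * H * Sᴴ * k) - h' * k * (S * H * Sᴴ * k) + S * h' * (k * H) * Sᴴ * k := by
    rw [Ring.lie_def]; noncomm_ring
  rw [hkH, mul_one] at hE
  have hsplit : ((R' * H + S * h') * Sᴴ + S * H * R'ᴴ) * k + S * H * Sᴴ * -(k * h' * k)
      = (2 • (R' * H * Sᴴ * k) - h' * k * (S * H * Sᴴ * k) + S * h' * Sᴴ * k)
        + (S * H * R'ᴴ * k - R' * H * Sᴴ * k)
        + (h' * k * (S * H * Sᴴ * k) - S * H * Sᴴ * k * (h' * k)) := by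
    noncomm_ring
  have hsymm := hInner_comm hherm S R'
  rw [hInner, hInner] at hsymm
  rw [hInner, hE, hsplit, trace_add, trace_add, trace_sub, trace_sub, trace_mul_comm (h' * k),
    sub_self, add_zero, mul_add, Complex.add_re, mul_sub, Complex.sub_re, hsymm, sub_self,
    add_zero]

theorem stmt_10_general (ε : ℝ)
    (c c₀ v v₀ : ℝ → Matrix (Fin 2) (Fin 2) ℂ)
    (hc₀ : ∀ s, memD (c₀ s))
    (hdc₀ : Differentiable ℝ c₀)
    (hdv : Differentiable ℝ v) (hdv₀ : Differentiable ℝ v₀)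
    -- `v` and `v₀` are parallel along `c` and `c₀` respectively
    (hv : ∀ s, deriv v s = (2 : ℂ)⁻¹ • ⁅deriv c s * (c s)⁻¹, v s⁆)
    (hv₀ : ∀ s, deriv v₀ s = (2 : ℂ)⁻¹ • ⁅deriv c₀ s * (c₀ s)⁻¹, v₀ s⁆)
    -- `v₀` is a unit field
    (hunit₀ : ∀ s, hNorm (c₀ s) (v₀ s) = 1)
    -- `‖r(s)‖_{c₀} < ε`
    (hr : ∀ s, hNorm (c₀ s) (deriv c s * (c s)⁻¹ - deriv c₀ s * (c₀ s)⁻¹) < ε)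
    (t : ℝ) :
    deriv (fun s => hNormSq (c₀ s) (v s - v₀ s)) t
      ≤ 2 * ε * (hNormSq (c₀ t) (v t - v₀ t) + hNorm (c₀ t) (v t - v₀ t)) := by
  obtain ⟨hherm, -, hpos⟩ := hc₀ t
  have hderiv := hasDerivAt_hNormSq (R := fun s => v s - v₀ s) (hdc₀ t).hasDerivAt
    ((hdv t).hasDerivAt.sub (hdv₀ t).hasDerivAt) hherm hpos.isUnit
  beta_reduce at hderiv
  set r := deriv c t * (c t)⁻¹ - deriv c₀ t * (c₀ t)⁻¹
  set R := v t - v₀ t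
  have hcov : (2 : ℕ) • (deriv v t - deriv v₀ t) - ⁅deriv c₀ t * (c₀ t)⁻¹, R⁆ = ⁅r, R + v₀ t⁆ := by
    simp only [hv, hv₀, R, r, sub_add_cancel, Ring.lie_def, two_nsmul, mul_sub, sub_mul]
    module
  have hR : 0 ≤ hNormSq (c₀ t) R + hNorm (c₀ t) R := by
    rw [← hNorm_sq hpos.posSemidef]; have := hNorm_nonneg (c₀ t) R; positivity
  calc deriv (fun s => hNormSq (c₀ s) (v s - v₀ s)) t
      = hInner (c₀ t) ⁅r, R + v₀ t⁆ R :=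
        hderiv.deriv.trans (congrArg (hInner (c₀ t) · R) hcov)
    _ ≤ 2 * hNorm (c₀ t) r * (hNormSq (c₀ t) R + hNorm (c₀ t) (v₀ t) * hNorm (c₀ t) R) :=
      hInner_lie_add_le hpos _ _ _
    _ ≤ 2 * ε * (hNormSq (c₀ t) R + hNorm (c₀ t) R) := by
      rw [hunit₀ t, one_mul]
      gcongr
      exact (hr t).le

/-- With `R = v - v₀` and `r = ċ c⁻¹ - ċ₀ c₀⁻¹` satisfying `‖r‖_{c₀} < ε`, and `v₀`
a unit parallel field, one has the differential inequality
`d/dt ‖R‖²_{c₀} ≤ 2 ε (‖R‖²_{c₀} + ‖R‖_{c₀})`. -/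
theorem stmt_10 (ε : ℝ) (hε : 0 < ε)
    (c c₀ v v₀ : ℝ → Matrix (Fin 2) (Fin 2) ℂ)
    (hc : ∀ s, memD (c s)) (hc₀ : ∀ s, memD (c₀ s))
    (hdc : Differentiable ℝ c) (hdc₀ : Differentiable ℝ c₀)
    (hdv : Differentiable ℝ v) (hdv₀ : Differentiable ℝ v₀)
    -- `v` and `v₀` are parallel along `c` and `c₀` respectively
    (hv : ∀ s, deriv v s = (2 : ℂ)⁻¹ • ⁅deriv c s * (c s)⁻¹, v s⁆)
    (hv₀ : ∀ s, deriv v₀ s = (2 : ℂ)⁻¹ • ⁅deriv c₀ s * (c₀ s)⁻¹, v₀ s⁆)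
    -- `v₀` is a unit field
    (hunit₀ : ∀ s, hNorm (c₀ s) (v₀ s) = 1)
    -- `‖r(s)‖_{c₀} < ε`
    (hr : ∀ s, hNorm (c₀ s) (deriv c s * (c s)⁻¹ - deriv c₀ s * (c₀ s)⁻¹) < ε)
    (t : ℝ) :
    deriv (fun s => hNormSq (c₀ s) (v s - v₀ s)) t
      ≤ 2 * ε * (hNormSq (c₀ t) (v t - v₀ t) + hNorm (c₀ t) (v t - v₀ t)) :=
  stmt_10_general ε c c₀ v v₀ hc₀ hdc₀ hdv hdv₀ hv hv₀ hunit₀ hr t
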